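/- arXiv:2310.13777 — 2 statements merged into one kernel-verified Lean document; each statement's English description precedes it below -/
import Mathlib

section
/- Let n, k ≥ 1 be integers with k dividing n, and suppose the set of all k-element subsets of {1,…,n} can be partitioned into classes each consisting of n/k pairwise disjoint subsets whose union is {1,…,n} (Baranyai's theorem). Let a : {1,…,n} → ℝ≥0 be a nonnegative weight function with total sum at least n/k. Then the number of k-element subsets S of {1,…,n} with ∑_{i∈S} a(i) ≥ 1 is at least (k/n) · C(n, k). -/
/-! Each class of the partition is a partition of `{1, …, n}` into `n / k` blocks, so the block
sums of a class add up to `∑ i, a i ≥ n / k`, and by pigeonhole some block has sum at least `1`.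
Blocks of different classes are different sets, so there are at least as many such good sets as
classes, and counting the `k`-sets class by class shows there are `(k / n) · C(n, k)` classes. -/

open Finset

section Partition

variable {β : Type*} {s : Finset β} {P : Finset (Finset β)}

theorem pairwiseDisjoint_of_existsUnique (hpart : ∀ x ∈ s, ∃! C, C ∈ P ∧ x ∈ C)
    (hsub : ∀ C ∈ P, C ⊆ s) : (P : Set (Finset β)).PairwiseDisjoint id := by
  intro C₁ h₁ C₂ h₂ hne
  refine disjoint_left.2 fun x hx₁ hx₂ => hne ?_
  obtain ⟨C, -, huniq⟩ := hpart x (hsub C₁ h₁ hx₁)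
  exact (huniq C₁ ⟨h₁, hx₁⟩).trans (huniq C₂ ⟨h₂, hx₂⟩).symm

theorem sup_id_eq_of_existsUnique [DecidableEq β] (hpart : ∀ x ∈ s, ∃! C, C ∈ P ∧ x ∈ C)
    (hsub : ∀ C ∈ P, C ⊆ s) : P.sup id = s := by
  refine subset_antisymm (Finset.sup_le hsub) fun x hx => ?_
  obtain ⟨C, ⟨hC, hxC⟩, -⟩ := hpart x hx
  exact mem_sup.2 ⟨C, hC, hxC⟩

theorem card_eq_card_mul_of_pairwiseDisjoint [DecidableEq β] {m : ℕ}
    (hdisj : (P : Set (Finset β)).PairwiseDisjoint id) (hcover : P.sup id = s)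
    (hcard : ∀ C ∈ P, C.card = m) : s.card = P.card * m := by
  rw [← hcover, sup_eq_biUnion, card_biUnion hdisj]
  exact sum_const_nat hcard

theorem card_le_card_filter_of_forall_exists {p : β → Prop} [DecidablePred p]
    (hdisj : (P : Set (Finset β)).PairwiseDisjoint id) (hsub : ∀ C ∈ P, C ⊆ s)
    (hp : ∀ C ∈ P, ∃ x ∈ C, p x) : P.card ≤ (s.filter p).card := by
  choose f hfC hfp using fun C : P => hp C C.2
  rw [← card_attach]
  refine card_le_card_of_injOn f (fun C _ => mem_filter.2 ⟨hsub C C.2 (hfC C), hfp C⟩) ?_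
  intro C₁ _ C₂ _ heq
  by_contra hne
  exact disjoint_left.1 (hdisj C₁.2 C₂.2 (Subtype.coe_injective.ne hne)) (hfC C₁) (heq ▸ hfC C₂)

end Partition

theorem exists_one_le_sum_of_card_le_sum {α : Type*} [Fintype α] [DecidableEq α] [Nonempty α]
    {C : Finset (Finset α)} (hdisj : (C : Set (Finset α)).PairwiseDisjoint id)
    (hcover : C.sup id = univ) {a : α → ℝ} (hsum : (C.card : ℝ) ≤ ∑ i, a i) :
    ∃ S ∈ C, 1 ≤ ∑ i ∈ S, a i := by
  have hne : C.Nonempty := by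
    by_contra h
    rw [not_nonempty_iff_eq_empty.1 h, sup_empty] at hcover
    exact univ_nonempty.ne_empty hcover.symm
  have hsplit : ∑ i, a i = ∑ S ∈ C, ∑ i ∈ S, a i := by
    rw [← hcover, sup_eq_biUnion, sum_biUnion hdisj]
    rfl
  refine exists_le_of_sum_le hne ?_
  simpa [← hsplit] using hsum

theorem stmt_8_general (n k : ℕ) (hn : 1 ≤ n) (hdvd : k ∣ n)
    (P : Finset (Finset (Finset (Fin n))))
    (hpart : ∀ S : Finset (Fin n), S.card = k → ∃! C, C ∈ P ∧ S ∈ C)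
    (hclass : ∀ C ∈ P, C.card = n / k ∧ (∀ S ∈ C, S.card = k) ∧
      (∀ S ∈ C, ∀ T ∈ C, S ≠ T → Disjoint S T) ∧ C.sup id = Finset.univ)
    (a : Fin n → ℝ) (hsum : (n : ℝ) / (k : ℝ) ≤ ∑ i, a i) :
    ((k : ℝ) / n) * (Nat.choose n k : ℝ) ≤
      (((Finset.univ : Finset (Fin n)).powersetCard k).filter
        (fun S => 1 ≤ ∑ i ∈ S, a i)).card := by
  have hk : 0 < k := Nat.pos_of_dvd_of_pos hdvd hn
  have : Nonempty (Fin n) := ⟨⟨0, hn⟩⟩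
  have hsub : ∀ C ∈ P, C ⊆ powersetCard k univ := fun C hC S hS =>
    mem_powersetCard_univ.2 ((hclass C hC).2.1 S hS)
  have hpart' : ∀ S ∈ powersetCard k univ, ∃! C, C ∈ P ∧ S ∈ C := fun S hS =>
    hpart S (mem_powersetCard_univ.1 hS)
  have hdisj := pairwiseDisjoint_of_existsUnique hpart' hsub
  have hcount : n.choose k = P.card * (n / k) := by
    simpa using card_eq_card_mul_of_pairwiseDisjoint hdisj
      (sup_id_eq_of_existsUnique hpart' hsub) fun C hC => (hclass C hC).1
  have hgood : ∀ C ∈ P, ∃ S ∈ C, 1 ≤ ∑ i ∈ S, a i := fun C hC => by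
    obtain ⟨hcard, -, hdisjC, hcoverC⟩ := hclass C hC
    refine exists_one_le_sum_of_card_le_sum (fun S hS T hT => hdisjC S hS T hT) hcoverC ?_
    rwa [hcard, Nat.cast_div hdvd (by positivity)]
  calc ((k : ℝ) / n) * (n.choose k : ℝ) = P.card := by
        rw [hcount, Nat.cast_mul, Nat.cast_div hdvd (by positivity)]
        field_simp
    _ ≤ _ := by exact_mod_cast card_le_card_filter_of_forall_exists hdisj hsub hgood

theorem stmt_8 (n k : ℕ) (hn : 1 ≤ n) (hk : 1 ≤ k) (hdvd : k ∣ n)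
    (P : Finset (Finset (Finset (Fin n))))
    (hpart : ∀ S : Finset (Fin n), S.card = k → ∃! C, C ∈ P ∧ S ∈ C)
    (hclass : ∀ C ∈ P, C.card = n / k ∧ (∀ S ∈ C, S.card = k) ∧
      (∀ S ∈ C, ∀ T ∈ C, S ≠ T → Disjoint S T) ∧ C.sup id = Finset.univ)
    (a : Fin n → ℝ) (ha : ∀ i, 0 ≤ a i) (hsum : (n : ℝ) / (k : ℝ) ≤ ∑ i, a i) :
    ((k : ℝ) / n) * (Nat.choose n k : ℝ) ≤
      (((Finset.univ : Finset (Fin n)).powersetCard k).filter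
        (fun S => 1 ≤ ∑ i ∈ S, a i)).card :=
  stmt_8_general n k hn hdvd P hpart hclass a hsum
end

section
/- Let a₁ ≥ a₂ ≥ a₃ ≥ a₄ ≥ a₅ ≥ 0 be real numbers with a₁+a₂+a₃+a₄+a₅ ≥ 5/3. Then at least 3 of the 10 triples {i,j,l} ⊆ {1,2,3,4,5} satisfy a_i + a_j + a_l ≥ 1. -/
theorem stmt_9 (a : Fin 5 → ℝ) (hmono : ∀ i j : Fin 5, i ≤ j → a j ≤ a i)
    (hnn : ∀ i, 0 ≤ a i) (hsum : (5 : ℝ) / 3 ≤ ∑ i, a i) :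
    3 ≤ (((Finset.univ : Finset (Fin 5)).powersetCard 3).filter
      (fun S => 1 ≤ ∑ i ∈ S, a i)).card := by
  rw [Fin.sum_univ_five] at hsum
  have h01 : a 1 ≤ a 0 := hmono 0 1 (by decide)
  have h12 : a 2 ≤ a 1 := hmono 1 2 (by decide)
  have h23 : a 3 ≤ a 2 := hmono 2 3 (by decide)
  have h34 : a 4 ≤ a 3 := hmono 3 4 (by decide)
  have key : (1 ≤ a 0 + a 2 + a 3) ∨ (1 ≤ a 0 + a 1 + a 4) := by
    by_contra h
    push_neg at h
    obtain ⟨h1, h2⟩ := h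
    linarith
  have e012 : ∑ i ∈ ({0,1,2} : Finset (Fin 5)), a i = a 0 + a 1 + a 2 := by
    simp [Finset.sum_insert, add_assoc]
  have e013 : ∑ i ∈ ({0,1,3} : Finset (Fin 5)), a i = a 0 + a 1 + a 3 := by
    simp [Finset.sum_insert, add_assoc]
  have e023 : ∑ i ∈ ({0,2,3} : Finset (Fin 5)), a i = a 0 + a 2 + a 3 := by
    simp [Finset.sum_insert, add_assoc]
  have e014 : ∑ i ∈ ({0,1,4} : Finset (Fin 5)), a i = a 0 + a 1 + a 4 := by
    simp [Finset.sum_insert, add_assoc]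
  have hT12 : ∀ S3 : Finset (Fin 5), S3 ∈ Finset.powersetCard 3 Finset.univ →
      S3 ≠ {0,1,2} → S3 ≠ {0,1,3} →
      (1 ≤ ∑ i ∈ S3, a i) →
      3 ≤ (((Finset.univ : Finset (Fin 5)).powersetCard 3).filter
        (fun S => 1 ≤ ∑ i ∈ S, a i)).card := by
    intro S3 hmem hne1 hne2 hge
    have hsum12 : 1 ≤ a 0 + a 1 + a 2 := by
      rcases key with hk | hk <;> linarith
    have hsum13 : 1 ≤ a 0 + a 1 + a 3 := by
      rcases key with hk | hk <;> linarith
    have sub : ({({0,1,2} : Finset (Fin 5)), {0,1,3}, S3} : Finset (Finset (Fin 5))) ⊆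
        (((Finset.univ : Finset (Fin 5)).powersetCard 3).filter
          (fun S => 1 ≤ ∑ i ∈ S, a i)) := by
      intro S hS
      simp only [Finset.mem_insert, Finset.mem_singleton] at hS
      rcases hS with rfl | rfl | rfl
      · exact Finset.mem_filter.mpr ⟨by decide, by rw [e012]; exact hsum12⟩
      · exact Finset.mem_filter.mpr ⟨by decide, by rw [e013]; exact hsum13⟩
      · exact Finset.mem_filter.mpr ⟨hmem, hge⟩
    calc 3 = ({({0,1,2} : Finset (Fin 5)), {0,1,3}, S3} : Finset (Finset (Fin 5))).card := by
              rw [Finset.card_insert_of_notMem (by simp [hne1.symm, (by decide : ({0,1,2} : Finset (Fin 5)) ≠ {0,1,3})]),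
                  Finset.card_insert_of_notMem (by simp [hne2.symm])]
              simp
      _ ≤ _ := Finset.card_le_card sub
  rcases key with hk | hk
  · exact hT12 {0,2,3} (by decide) (by decide) (by decide) (by rw [e023]; exact hk)
  · exact hT12 {0,1,4} (by decide) (by decide) (by decide) (by rw [e014]; exact hk)
end
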